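/- In ℤ[C₅], let σᵢ be the ring automorphism induced by t ↦ tⁱ for i coprime to 5. Then σ₄(u₅) = u₅ exactly, while u₅ and σ₂(u₅) = 1 − t² − t³ are distinct modulo trivial units: for every sign ε ∈ {1,−1} and every k ∈ {0,1,2,3,4}, one has u₅ ≠ ε·tᵏ and σ₂(u₅) ≠ ε·tᵏ·u₅. Hence u₅ and σ₂(u₅) represent two distinct nontrivial elements of Wh(C₅) = ℤ[C₅]ˣ/(±C₅) interchanged only by σ₂, and the orbit of the class of u₅ under the automorphisms σᵢ has exactly two elements. -/

import Mathlib

/-!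
Since `σᵢ t = tⁱ` and `t⁵ = 1`, `σᵢ(u₅) = 1 − t^(i mod 5) − t^(4i mod 5)`, which gives the three
identities. The non-equalities are seen after reducing modulo 31 via `t ↦ 2`, a primitive fifth
root of unity in `𝔽₃₁`: the trivial units `±tᵏ` land in `±⟨2⟩ = {±1, ±2, ±4, ±8, ±16}`, whereas
`u₅ ↦ 14` and `σ₂(u₅) / u₅ ↦ 20 / 14 = −3` lie outside it.
-/

/-- `C₅`, the multiplicative cyclic group of order 5. -/
abbrev C5 : Type := Multiplicative (ZMod 5)

/-- The generator `t` of `C₅`, viewed inside the integral group ring `ℤ[C₅]`. -/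
noncomputable def t : MonoidAlgebra ℤ C5 :=
  MonoidAlgebra.of ℤ C5 (Multiplicative.ofAdd (1 : ZMod 5))

/-- The unit `u₅ = 1 − t − t⁴` of `ℤ[C₅]`. -/
noncomputable def u5 : MonoidAlgebra ℤ C5 := 1 - t - t ^ 4

/-- `σᵢ`, the ring automorphism of `ℤ[C₅]` induced by the group automorphism `t ↦ tⁱ`. -/
noncomputable def sigma (i : ℕ) : MonoidAlgebra ℤ C5 →+* MonoidAlgebra ℤ C5 :=
  MonoidAlgebra.mapDomainRingHom ℤ (powMonoidHom i : C5 →* C5)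

open MonoidAlgebra

def ZMod.powersHom {M : Type*} [Monoid M] (n : ℕ) [NeZero n] (g : M) (hg : g ^ n = 1) :
    Multiplicative (ZMod n) →* M where
  toFun a := g ^ a.toAdd.val
  map_one' := by simp
  map_mul' a b := by rw [toAdd_mul, ZMod.val_add, ← pow_eq_pow_mod _ hg, pow_add]

lemma ZMod.powersHom_ofAdd_one {M : Type*} [Monoid M] (n : ℕ) [NeZero n] (g : M)
    (hg : g ^ n = 1) : ZMod.powersHom n g hg (.ofAdd 1) = g := by
  change g ^ (1 : ZMod n).val = g
  rw [ZMod.val_one_eq_one_mod, ← pow_eq_pow_mod 1 hg, pow_one]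

lemma t_pow_five : t ^ 5 = 1 := by
  rw [t, ← map_pow, ← ofAdd_nsmul]
  exact map_one _

lemma t_pow_mod (k : ℕ) : t ^ k = t ^ (k % 5) := pow_eq_pow_mod k t_pow_five

lemma sigma_t (i : ℕ) : sigma i t = t ^ i := by simp [sigma, t]

lemma sigma_u5 (i : ℕ) : sigma i u5 = 1 - t ^ (i % 5) - t ^ (i * 4 % 5) := by
  rw [u5, map_sub, map_sub, map_one, map_pow, sigma_t, ← pow_mul, ← t_pow_mod, ← t_pow_mod]

lemma sigma_four_u5 : sigma 4 u5 = u5 := by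
  rw [sigma_u5, u5]
  simp only [Nat.reduceMul, Nat.reduceMod, pow_one]
  abel

lemma sigma_two_u5 : sigma 2 u5 = 1 - t ^ 2 - t ^ 3 := sigma_u5 2

lemma sigma_three_u5 : sigma 3 u5 = sigma 2 u5 := by
  rw [sigma_u5, sigma_two_u5]
  simp only [Nat.reduceMul, Nat.reduceMod]
  abel

noncomputable def evalMod31 : MonoidAlgebra ℤ C5 →+* ZMod 31 :=
  (lift ℤ (ZMod 31) C5 (ZMod.powersHom 5 2 (by decide))).toRingHom

lemma evalMod31_t : evalMod31 t = 2 :=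
  (lift_of _ _).trans (ZMod.powersHom_ofAdd_one 5 2 _)

lemma evalMod31_u5 : evalMod31 u5 = 14 := by
  rw [u5, map_sub, map_sub, map_one, map_pow, evalMod31_t]
  decide

lemma evalMod31_sigma_two_u5 : evalMod31 (sigma 2 u5) = 20 := by
  rw [sigma_two_u5, map_sub, map_sub, map_one, map_pow, map_pow, evalMod31_t]
  decide

lemma zmod31_ne_sign_mul_two_pow : ∀ e : ZMod 31, (e = 1 ∨ e = -1) → ∀ k : ℕ, k ≤ 4 →
    (14 : ZMod 31) ≠ e * 2 ^ k ∧ (20 : ZMod 31) ≠ e * 2 ^ k * 14 := by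
  decide

/-- `σ₄(u₅) = u₅` exactly, while `u₅` and `σ₂(u₅) = 1 − t² − t³` are
distinct modulo trivial units `±tᵏ` (and `u₅` is not a trivial unit).  Moreover
`σ₃(u₅) = σ₂(u₅)`, so the orbit of the class of `u₅` in `Wh(C₅) = ℤ[C₅]ˣ/(±C₅)` under
the automorphisms `σᵢ` has exactly the two elements `[u₅]` and `[σ₂(u₅)]`. -/
theorem u5_orbit :
    sigma 4 u5 = u5 ∧
    sigma 2 u5 = 1 - t ^ 2 - t ^ 3 ∧
    sigma 3 u5 = sigma 2 u5 ∧
    (∀ ε : MonoidAlgebra ℤ C5, (ε = 1 ∨ ε = -1) → ∀ k : ℕ, k ≤ 4 →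
      u5 ≠ ε * t ^ k ∧ sigma 2 u5 ≠ ε * t ^ k * u5) := by
  refine ⟨sigma_four_u5, sigma_two_u5, sigma_three_u5, fun ε hε k hk => ?_⟩
  have hε' : evalMod31 ε = 1 ∨ evalMod31 ε = -1 := by
    rcases hε with rfl | rfl <;> simp
  obtain ⟨h₁, h₂⟩ := zmod31_ne_sign_mul_two_pow _ hε' k hk
  refine ⟨fun h => h₁ ?_, fun h => h₂ ?_⟩
  · simpa [evalMod31_u5, evalMod31_t] using congrArg evalMod31 h
  · simpa [evalMod31_u5, evalMod31_sigma_two_u5, evalMod31_t] using congrArg evalMod31 h
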